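/- (The representing map of a super-map preserves convolution.) Fix m₁, m₂, m₃, m₄ and let V := (Matrix (Fin m₁) (Fin m₁) ℂ →ₗ[ℂ] Matrix (Fin m₂) (Fin m₂) ℂ) and W := (Matrix (Fin m₃) (Fin m₃) ℂ →ₗ[ℂ] Matrix (Fin m₄) (Fin m₄) ℂ). For ℂ-linear super-maps Θ₁, Θ₂ : V → W, define their convolution Θ₁ ⋆ Θ₂ : V → W as the unique ℂ-linear map with (Θ₁ ⋆ Θ₂)(𝓔_{ijkl}) = ∑_{p ∈ Fin m₂, q ∈ Fin m₁} Θ₁(𝓔_{ipkq}) * Θ₂(𝓔_{pjql}), where * on W is map convolution. Define the representing map T_Θ : Matrix (Fin m₁ × Fin m₂) (Fin m₁ × Fin m₂) ℂ → Matrix (Fin m₃ × Fin m₄) (Fin m₃ × Fin m₄) ℂ by T_Θ(X) := C_{Θ(Γ_X)}, where Γ_X is the unique linear map in V with Choi matrix X. Then T_{Θ₁ ⋆ Θ₂} = T_{Θ₁} * T_{Θ₂}, where * on representing maps is the convolution with respect to the matrix units of Matrix (Fin m₁ × Fin m₂) (Fin m₁ × Fin m₂) ℂ: (T₁ * T₂)(E_{αβ})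 = ∑_{γ ∈ Fin m₁ × Fin m₂} T₁(E_{αγ}) * T₂(E_{γβ}) for all matrix units E_{αβ}. -/

import Mathlib

/-!
STATEMENT 17: The representing map of a super-map preserves convolution:
for super-maps `Θ₁, Θ₂ : V → W` (with `V`, `W` spaces of linear maps between matrix
algebras), the representing map of `Θ₁ ⋆ Θ₂` is the convolution of the representing maps
of `Θ₁` and `Θ₂`: `T_{Θ₁ ⋆ Θ₂} = T_{Θ₁} * T_{Θ₂}`.
-/

namespace Stmt17

/-- The basis super-map `𝓔_{ijkl} : A ↦ (A k l) • e_{ij}`. -/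
noncomputable def basisMap {r s : ℕ} (i j : Fin s) (k l : Fin r) :
    Matrix (Fin r) (Fin r) ℂ →ₗ[ℂ] Matrix (Fin s) (Fin s) ℂ where
  toFun A := A k l • Matrix.single i j 1
  map_add' A B := by simp [Matrix.add_apply, add_smul]
  map_smul' c A := by simp [Matrix.smul_apply, smul_smul]

/-- The convolution of two linear maps `Φ Ψ`: the unique ℂ-linear map with
`(Φ * Ψ)(e_{ij}) = ∑ k, Φ(e_{ik}) * Ψ(e_{kj})`. -/
noncomputable def conv {r s : ℕ}
    (Φ Ψ : Matrix (Fin r) (Fin r) ℂ →ₗ[ℂ] Matrix (Fin s) (Fin s) ℂ) :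
    Matrix (Fin r) (Fin r) ℂ →ₗ[ℂ] Matrix (Fin s) (Fin s) ℂ :=
  (Matrix.stdBasis ℂ (Fin r) (Fin r)).constr ℂ fun p =>
    ∑ k : Fin r, Φ (Matrix.single p.1 k 1) * Ψ (Matrix.single k p.2 1)

/-- The Choi matrix of a linear map `Φ`, with entries
`C_Φ ((i,a),(j,b)) = (Φ e_{ij}) a b`. -/
noncomputable def choi {r s : ℕ}
    (Φ : Matrix (Fin r) (Fin r) ℂ →ₗ[ℂ] Matrix (Fin s) (Fin s) ℂ) :
    Matrix (Fin r × Fin s) (Fin r × Fin s) ℂ :=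
  Matrix.of fun p q => Φ (Matrix.single p.1 q.1 1) p.2 q.2

/-- `Γ_X`: the unique linear map whose Choi matrix is `X` (the inverse of `choi`),
determined by `Γ_X (e_{ij}) a b = X (i,a) (j,b)`. -/
noncomputable def gamma {r s : ℕ} (X : Matrix (Fin r × Fin s) (Fin r × Fin s) ℂ) :
    Matrix (Fin r) (Fin r) ℂ →ₗ[ℂ] Matrix (Fin s) (Fin s) ℂ :=
  (Matrix.stdBasis ℂ (Fin r) (Fin r)).constr ℂ fun p =>
    Matrix.of fun a b => X (p.1, a) (p.2, b)

/-!
Both sides are linear in `X`, so it suffices to compare them on matrix units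
`E_{(i,a),(j,b)}`. Here `Γ` turns matrix units into basis super-maps,
`Γ(E_{(i,a),(j,b)}) = 𝓔_{abij}`, and taking Choi matrices turns map convolution into matrix
multiplication, so both sides become the same double sum over `Fin m₂ × Fin m₁`.
-/

open Matrix

section MatrixUnits

variable {R M : Type*} {m n : Type*} [Fintype m] [Fintype n] [DecidableEq m] [DecidableEq n]
  [Semiring R] [AddCommMonoid M] [Module R M]

theorem linearMap_ext_single {f g : Matrix m n R →ₗ[R] M}
    (h : ∀ i j, f (single i j 1) = g (single i j 1)) : f = g :=
  (stdBasis R m n).ext fun ⟨i, j⟩ => by rw [stdBasis_eq_single]; exact h i j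

theorem stdBasis_constr_single {S : Type*} [Semiring S] [Module S M] [SMulCommClass R S M]
    (f : m × n → M) (i : m) (j : n) :
    (stdBasis R m n).constr S f (single i j 1) = f (i, j) := by
  rw [← stdBasis_eq_single, Module.Basis.constr_basis]

end MatrixUnits

variable {r s : ℕ}

theorem conv_single (Φ Ψ : Matrix (Fin r) (Fin r) ℂ →ₗ[ℂ] Matrix (Fin s) (Fin s) ℂ)
    (i j : Fin r) :
    conv Φ Ψ (single i j 1) = ∑ k, Φ (single i k 1) * Ψ (single k j 1) :=
  stdBasis_constr_single _ i j

theorem gamma_single (X : Matrix (Fin r × Fin s) (Fin r × Fin s) ℂ) (i j : Fin r) :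
    gamma X (single i j 1) = of fun a b => X (i, a) (j, b) :=
  stdBasis_constr_single _ i j

theorem choi_conv (Φ Ψ : Matrix (Fin r) (Fin r) ℂ →ₗ[ℂ] Matrix (Fin s) (Fin s) ℂ) :
    choi (conv Φ Ψ) = choi Φ * choi Ψ := by
  ext ⟨k, c⟩ ⟨l, d⟩
  simp only [choi, of_apply, conv_single, mul_apply, Matrix.sum_apply, Fintype.sum_prod_type]

theorem gamma_single_single (i j : Fin r) (a b : Fin s) :
    gamma (single (i, a) (j, b) (1 : ℂ)) = basisMap a b i j := by
  refine linearMap_ext_single fun k l => ?_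
  ext c d
  simp only [gamma_single, basisMap, LinearMap.coe_mk, AddHom.coe_mk, of_apply, Matrix.smul_apply,
    single_apply, Prod.mk.injEq, smul_eq_mul]
  grind

noncomputable def choiLinearMap :
    (Matrix (Fin r) (Fin r) ℂ →ₗ[ℂ] Matrix (Fin s) (Fin s) ℂ) →ₗ[ℂ]
      Matrix (Fin r × Fin s) (Fin r × Fin s) ℂ where
  toFun := choi
  map_add' Φ Ψ := by ext; simp [choi]
  map_smul' c Φ := by ext; simp [choi]

noncomputable def gammaLinearMap :
    Matrix (Fin r × Fin s) (Fin r × Fin s) ℂ →ₗ[ℂ]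
      (Matrix (Fin r) (Fin r) ℂ →ₗ[ℂ] Matrix (Fin s) (Fin s) ℂ) where
  toFun := gamma
  map_add' X Y := linearMap_ext_single fun i j => by ext; simp [gamma_single]
  map_smul' c X := linearMap_ext_single fun i j => by ext; simp [gamma_single]

theorem representing_map_preserves_convolution {m₁ m₂ m₃ m₄ : ℕ}
    (Θ₁ Θ₂ Θ : (Matrix (Fin m₁) (Fin m₁) ℂ →ₗ[ℂ] Matrix (Fin m₂) (Fin m₂) ℂ) →ₗ[ℂ]
      (Matrix (Fin m₃) (Fin m₃) ℂ →ₗ[ℂ] Matrix (Fin m₄) (Fin m₄) ℂ))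
    -- `Θ` is the super-map convolution `Θ₁ ⋆ Θ₂`
    (hΘ : ∀ (i j : Fin m₂) (k l : Fin m₁),
      Θ (basisMap i j k l) =
        ∑ p : Fin m₂, ∑ q : Fin m₁,
          conv (Θ₁ (basisMap i p k q)) (Θ₂ (basisMap p j q l)))
    (T : Matrix (Fin m₁ × Fin m₂) (Fin m₁ × Fin m₂) ℂ →ₗ[ℂ]
      Matrix (Fin m₃ × Fin m₄) (Fin m₃ × Fin m₄) ℂ)
    -- `T` is the convolution `T_{Θ₁} * T_{Θ₂}` of the representing maps,
    -- with respect to the matrix units of `Matrix (Fin m₁ × Fin m₂) _ ℂ`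
    (hT : ∀ α β : Fin m₁ × Fin m₂,
      T (Matrix.single α β 1) =
        ∑ γ : Fin m₁ × Fin m₂,
          choi (Θ₁ (gamma (Matrix.single α γ 1))) *
            choi (Θ₂ (gamma (Matrix.single γ β 1)))) :
    -- the representing map `T_Θ : X ↦ C_{Θ(Γ_X)}` of `Θ = Θ₁ ⋆ Θ₂` equals `T`
    ∀ X : Matrix (Fin m₁ × Fin m₂) (Fin m₁ × Fin m₂) ℂ,
      choi (Θ (gamma X)) = T X := by
  suffices choiLinearMap ∘ₗ Θ ∘ₗ gammaLinearMap = T from fun X => LinearMap.congr_fun this X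
  refine linearMap_ext_single fun ⟨i, a⟩ ⟨j, b⟩ => ?_
  calc choi (Θ (gamma (single (i, a) (j, b) 1)))
      = ∑ p, ∑ q, choi (Θ₁ (basisMap a p i q)) * choi (Θ₂ (basisMap p b q j)) := by
        change choiLinearMap _ = _
        simp only [gamma_single_single, hΘ, map_sum]
        simp only [choiLinearMap, LinearMap.coe_mk, AddHom.coe_mk, choi_conv]
    _ = T (single (i, a) (j, b) 1) := by
        simp only [hT, Fintype.sum_prod_type, gamma_single_single]
        exact Finset.sum_comm

end Stmt17
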